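/- Let θ ∈ ℝ and let p₁, p₂ be probability distributions on {0,1}. Define the two-qubit pure states ψ_{00} = |00⟩, ψ_{01} = cos(θ)|01⟩ + sin(θ)|10⟩, ψ_{10} = −sin(θ)|01⟩ + cos(θ)|10⟩, ψ_{11} = |11⟩ on B₁⊗B₂. Then the von Neumann entropy of the B₁ marginal of the averaged output state satisfies H(B₁) = H₂( p₁(0) + ( p₁(1)p₂(0) − p₁(0)p₂(1) ) sin²θ ), where the B₁ marginal is Σ_{x₁,x₂} p₁(x₁)p₂(x₂) Tr_{B₂}|ψ_{x₁x₂}⟩⟨ψ_{x₁x₂}|, H(σ) = −Tr(σ log₂ σ), and H₂(p) = −p log₂ p − (1−p) log₂(1−p). Symmetrically, the B₂ marginal Σ_{x₁,x₂} p₁(x₁)p₂(x₂) Tr_{B₁}|ψ_{x₁x₂}⟩⟨ψ_{x₁x₂}| has entropy H(B₂) = H₂( p₂(0) + ( p₁(0)p₂(1) − p₁(1)p₂(0) ) sin²θ ). -/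

import Mathlib

/-!
`ψ₀₁` and `ψ₁₀` superpose `|01⟩` and `|10⟩`, which differ on each qubit, and `ψ₀₀`, `ψ₁₁` are
product states, so every reduced state `Tr_{B₂} ψ` (resp. `Tr_{B₁} ψ`) is diagonal in the
computational basis. The averaged marginal is therefore `diag(a, 1 - a)`, with `a` the probability of reading `0` on
that qubit, and a qubit state of trace `1` and determinant `a (1 - a)` has eigenvalues
`{a, 1 - a}`, hence entropy `H₂(a)`.
-/

open scoped BigOperators ComplexOrder

noncomputable section

namespace QIC

/-- von Neumann entropy in bits, via eigenvalues (convention `0·log 0 = 0`). -/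
def vnEntropy {m : Type*} [Fintype m] [DecidableEq m] (ρ : Matrix m m ℂ) : ℝ :=
  if h : ρ.IsHermitian then -∑ i, h.eigenvalues i * Real.logb 2 (h.eigenvalues i) else 0

/-- min-entropy in bits: `−log₂` of the largest eigenvalue. -/
def minEntropy {m : Type*} [Fintype m] [DecidableEq m] (ρ : Matrix m m ℂ) : ℝ :=
  if h : ρ.IsHermitian then -Real.logb 2 (⨆ i, h.eigenvalues i) else 0

/-- A density operator: positive semidefinite with unit trace. -/
def IsDensity {m : Type*} [Fintype m] [DecidableEq m] (ρ : Matrix m m ℂ) : Prop :=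
  ρ.PosSemidef ∧ ρ.trace = 1

/-- A POVM: a finite family of positive semidefinite operators summing to the identity. -/
def IsPOVM {ι m : Type*} [Fintype ι] [Fintype m] [DecidableEq m]
    (Λ : ι → Matrix m m ℂ) : Prop :=
  (∀ i, (Λ i).PosSemidef) ∧ ∑ i, Λ i = 1

/-- A probability distribution on a finite alphabet. -/
def IsProbDist {X : Type*} [Fintype X] (p : X → ℝ) : Prop :=
  (∀ x, 0 ≤ p x) ∧ ∑ x, p x = 1

/-- `n`-fold tensor product of matrices on `Fin d`. -/
def tensorPow {d n : ℕ} (f : Fin n → Matrix (Fin d) (Fin d) ℂ) :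
    Matrix (Fin n → Fin d) (Fin n → Fin d) ℂ :=
  Matrix.of fun i j => ∏ k, f k (i k) (j k)

/-- The positive semidefinite square root of a positive semidefinite matrix
(the definition of `Matrix.PosSemidef.sqrt` in the older Mathlib, which has since been removed). -/
def psdSqrt {m : Type*} [Fintype m] [DecidableEq m] {A : Matrix m m ℂ} (hA : A.PosSemidef) :
    Matrix m m ℂ :=
  hA.1.eigenvectorUnitary.1 * Matrix.diagonal ((↑) ∘ (√·) ∘ hA.1.eigenvalues) *
  (star hA.1.eigenvectorUnitary : Matrix m m ℂ)

/-- Positive semidefinite square root (zero on non-PSD matrices). -/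
def msqrt {m : Type*} [Fintype m] [DecidableEq m] (X : Matrix m m ℂ) : Matrix m m ℂ :=
  open Classical in if h : X.PosSemidef then psdSqrt h else 0

/-- Trace norm `‖X‖₁ = Tr √(XᴴX)`. -/
def traceNorm {m : Type*} [Fintype m] [DecidableEq m] (X : Matrix m m ℂ) : ℝ :=
  (psdSqrt (Matrix.posSemidef_conjTranspose_mul_self X)).trace.re

/-- Loewner order: `A ≤ B` iff `B − A` is positive semidefinite. -/
def loewnerLE {m : Type*} [Fintype m] [DecidableEq m] (A B : Matrix m m ℂ) : Prop :=
  (B - A).PosSemidef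

/-- Outer product `|ψ⟩⟨ψ|` of a vector. -/
def outer {m : Type*} (v : m → ℂ) : Matrix m m ℂ :=
  Matrix.of fun i j => v i * star (v j)

/-- Binary entropy function `H₂(p) = −p log₂ p − (1−p) log₂(1−p)`. -/
def binEnt (p : ℝ) : ℝ :=
  -(p * Real.logb 2 p) - (1 - p) * Real.logb 2 (1 - p)

/-- Partial trace over the second qubit. -/
def ptraceB2 {d1 d2 : ℕ} (M : Matrix (Fin d1 × Fin d2) (Fin d1 × Fin d2) ℂ) :
    Matrix (Fin d1) (Fin d1) ℂ :=
  Matrix.of fun i j => ∑ k, M (i, k) (j, k)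

/-- Partial trace over the first qubit. -/
def ptraceB1 {d1 d2 : ℕ} (M : Matrix (Fin d1 × Fin d2) (Fin d1 × Fin d2) ℂ) :
    Matrix (Fin d2) (Fin d2) ℂ :=
  Matrix.of fun i j => ∑ k, M (k, i) (k, j)

/-- The computational basis vector `|a b⟩` of two qubits. -/
def ket2 (a b : Fin 2) : Fin 2 × Fin 2 → ℂ := fun i => if i = (a, b) then 1 else 0

/-- The output pure states of the `θ`-SWAP interference channel:
`00 ↦ |00⟩`, `01 ↦ cos θ |01⟩ + sin θ |10⟩`, `10 ↦ −sin θ |01⟩ + cos θ |10⟩`, `11 ↦ |11⟩`. -/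
def thetaSwap (θ : ℝ) (x1 x2 : Fin 2) : Fin 2 × Fin 2 → ℂ :=
  if x1 = 0 ∧ x2 = 0 then ket2 0 0
  else if x1 = 0 ∧ x2 = 1 then
    fun i => (Real.cos θ : ℂ) * ket2 0 1 i + (Real.sin θ : ℂ) * ket2 1 0 i
  else if x1 = 1 ∧ x2 = 0 then
    fun i => -(Real.sin θ : ℂ) * ket2 0 1 i + (Real.cos θ : ℂ) * ket2 1 0 i
  else ket2 1 1

open Matrix

theorem vnEntropy_fin_two_eq_binEnt {ρ : Matrix (Fin 2) (Fin 2) ℂ} (hρ : ρ.IsHermitian) {a : ℝ}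
    (htr : ρ.trace = 1) (hdet : ρ.det = ((a * (1 - a) : ℝ) : ℂ)) :
    vnEntropy ρ = binEnt a := by
  have hsum : hρ.eigenvalues 0 + hρ.eigenvalues 1 = 1 := by
    have := hρ.trace_eq_sum_eigenvalues
    rw [htr, Fin.sum_univ_two, ← RCLike.ofReal_add, ← RCLike.ofReal_one] at this
    exact RCLike.ofReal_inj.mp this.symm
  have hprod : hρ.eigenvalues 0 * hρ.eigenvalues 1 = a * (1 - a) := by
    have := hρ.det_eq_prod_eigenvalues
    rw [hdet, Fin.prod_univ_two, ← RCLike.ofReal_mul] at this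
    exact RCLike.ofReal_inj.mp this.symm
  have hroot : (hρ.eigenvalues 0 - a) * (hρ.eigenvalues 0 - (1 - a)) = 0 := by
    linear_combination hρ.eigenvalues 0 * hsum - hprod
  rw [vnEntropy, dif_pos hρ, Fin.sum_univ_two, binEnt]
  rcases mul_eq_zero.mp hroot with h0 | h0
  · rw [show hρ.eigenvalues 0 = a by linarith, show hρ.eigenvalues 1 = 1 - a by linarith]
    ring
  · rw [show hρ.eigenvalues 0 = 1 - a by linarith, show hρ.eigenvalues 1 = a by linarith]
    ring

theorem vnEntropy_diag_fin_two (a : ℝ) :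
    vnEntropy !![(a : ℂ), 0; 0, ((1 - a : ℝ) : ℂ)] = binEnt a := by
  have hρ : (!![(a : ℂ), 0; 0, ((1 - a : ℝ) : ℂ)]).IsHermitian := by
    ext i j
    fin_cases i <;> fin_cases j <;> simp [conjTranspose_apply]
  refine vnEntropy_fin_two_eq_binEnt hρ ?_ ?_
  · rw [trace_fin_two_of]; push_cast; ring
  · rw [det_fin_two_of]; push_cast; ring

section Marginals

variable (θ : ℝ) {p1 p2 : Fin 2 → ℝ}

theorem sum_smul_ptraceB2_outer_thetaSwap (h1 : p1 0 + p1 1 = 1) (h2 : p2 0 + p2 1 = 1) :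
    ∑ x1, ∑ x2, (p1 x1 * p2 x2) • ptraceB2 (outer (thetaSwap θ x1 x2))
      = let a := p1 0 + (p1 1 * p2 0 - p1 0 * p2 1) * Real.sin θ ^ 2
        !![(a : ℂ), 0; 0, ((1 - a : ℝ) : ℂ)] := by
  have hθ := Complex.sin_sq_add_cos_sq θ
  have h1C : (p1 0 : ℂ) + p1 1 = 1 := by exact_mod_cast h1
  have h2C : (p2 0 : ℂ) + p2 1 = 1 := by exact_mod_cast h2
  ext i j
  fin_cases i <;> fin_cases j <;>
    simp [Fin.sum_univ_two, Matrix.sum_apply, ptraceB2, outer, thetaSwap, ket2, Prod.ext_iff,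
      ← Complex.cos_conj, ← Complex.sin_conj] <;>
    [linear_combination (p1 0 : ℂ) * p2 1 * hθ + (p1 0 : ℂ) * h2C;
     linear_combination (p1 1 : ℂ) * p2 0 * hθ + (p1 1 : ℂ) * h2C + h1C]

theorem sum_smul_ptraceB1_outer_thetaSwap (h1 : p1 0 + p1 1 = 1) (h2 : p2 0 + p2 1 = 1) :
    ∑ x1, ∑ x2, (p1 x1 * p2 x2) • ptraceB1 (outer (thetaSwap θ x1 x2))
      = let b := p2 0 + (p1 0 * p2 1 - p1 1 * p2 0) * Real.sin θ ^ 2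
        !![(b : ℂ), 0; 0, ((1 - b : ℝ) : ℂ)] := by
  have hθ := Complex.sin_sq_add_cos_sq θ
  have h1C : (p1 0 : ℂ) + p1 1 = 1 := by exact_mod_cast h1
  have h2C : (p2 0 : ℂ) + p2 1 = 1 := by exact_mod_cast h2
  ext i j
  fin_cases i <;> fin_cases j <;>
    simp [Fin.sum_univ_two, Matrix.sum_apply, ptraceB1, outer, thetaSwap, ket2, Prod.ext_iff,
      ← Complex.cos_conj, ← Complex.sin_conj] <;>
    [linear_combination (p1 1 : ℂ) * p2 0 * hθ + (p2 0 : ℂ) * h1C;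
     linear_combination (p1 0 : ℂ) * p2 1 * hθ + (p2 1 : ℂ) * h1C + h2C]

end Marginals

/-- **Marginal output entropies of the `θ`-SWAP interference channel.**
For independent inputs `x₁ ∼ p₁`, `x₂ ∼ p₂`,
`H(B₁) = H₂(p₁(0) + (p₁(1)p₂(0) − p₁(0)p₂(1)) sin²θ)` and
`H(B₂) = H₂(p₂(0) + (p₁(0)p₂(1) − p₁(1)p₂(0)) sin²θ)`. -/
theorem theta_swap_marginal_entropies
    (θ : ℝ) (p1 p2 : Fin 2 → ℝ) (hp1 : IsProbDist p1) (hp2 : IsProbDist p2) :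
    (vnEntropy (∑ x1, ∑ x2, (p1 x1 * p2 x2) • ptraceB2 (outer (thetaSwap θ x1 x2)))
      = binEnt (p1 0 + (p1 1 * p2 0 - p1 0 * p2 1) * Real.sin θ ^ 2)) ∧
    (vnEntropy (∑ x1, ∑ x2, (p1 x1 * p2 x2) • ptraceB1 (outer (thetaSwap θ x1 x2)))
      = binEnt (p2 0 + (p1 0 * p2 1 - p1 1 * p2 0) * Real.sin θ ^ 2)) := by
  have h1 : p1 0 + p1 1 = 1 := by simpa [Fin.sum_univ_two] using hp1.2
  have h2 : p2 0 + p2 1 = 1 := by simpa [Fin.sum_univ_two] using hp2.2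
  rw [sum_smul_ptraceB2_outer_thetaSwap θ h1 h2, sum_smul_ptraceB1_outer_thetaSwap θ h1 h2]
  exact ⟨vnEntropy_diag_fin_two _, vnEntropy_diag_fin_two _⟩

end QIC
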